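/- For every integer n ≥ 6 divisible by 3 there is an instance of binary, symmetric Seat Arrangement whose price of fairness is at least n/4 + 1/12. Concretely, let the agents be P = P_K ⊔ P_C with |P_K| = |P_C| = n and fix a cyclic order c_1, …, c_n of P_C; let f_p(q) = 1 for all distinct p, q ∈ P_K, f_{c_i}(c_{i+1}) = f_{c_{i+1}}(c_i) = 1 for every i (indices modulo n), and all other preferences be 0; and let the seat graph G be the disjoint union of a clique K_n and n/3 disjoint triangles. Then every maximin arrangement π_f satisfies sw(π_f) = 4n and the maximum social welfare is at least n² + n/3; hence max_π sw(π) ≥ (n/4 + 1/12) · sw(π_f) for every maximin arrangement π_f. -/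

import Mathlib

open scoped Classical

noncomputable section

namespace SeatArrangement

variable {P V : Type*}

/-- The utility of agent `p` under arrangement `π`:
the sum, over the seat-graph neighbors `v` of `π p`, of `p`'s preference for the agent seated
at `v`. -/
def utility [Fintype V] (G : SimpleGraph V) (f : P → P → ℝ) (π : P ≃ V) (p : P) : ℝ :=
  ∑ v : V, if G.Adj (π p) v then f p (π.symm v) else 0

/-- The social welfare of an arrangement: the sum of the utilities of all agents. -/
def sw [Fintype P] [Fintype V] (G : SimpleGraph V) (f : P → P → ℝ) (π : P ≃ V) : ℝ :=
  ∑ p : P, utility G f π p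

/-- The `(p,q)`-swap arrangement of `π`. -/
def swapArr (π : P ≃ V) (p q : P) : P ≃ V := (Equiv.swap p q).trans π

/-- `{p, q}` is a blocking pair for `π`: both agents strictly improve by swapping seats. -/
def blocking [Fintype V] (G : SimpleGraph V) (f : P → P → ℝ) (π : P ≃ V) (p q : P) : Prop :=
  p ≠ q ∧ utility G f π p < utility G f (swapArr π p q) p
        ∧ utility G f π q < utility G f (swapArr π p q) q

/-- An arrangement is stable if it has no blocking pair. -/
def stable [Fintype V] (G : SimpleGraph V) (f : P → P → ℝ) (π : P ≃ V) : Prop :=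
  ∀ p q : P, ¬ blocking G f π p q

/-- An arrangement is envy-free if no agent would strictly improve by taking
another agent's seat (via a swap). -/
def envyFree [Fintype V] (G : SimpleGraph V) (f : P → P → ℝ) (π : P ≃ V) : Prop :=
  ∀ p q : P, p ≠ q → utility G f (swapArr π p q) p ≤ utility G f π p

/-- The least utility of an agent under `π` (for a finite nonempty set of agents, the
infimum of the range of utilities is the minimum utility). -/
def minUtil [Fintype V] (G : SimpleGraph V) (f : P → P → ℝ) (π : P ≃ V) : ℝ :=
  sInf (Set.range (utility G f π))

/-- A maximin arrangement maximizes the least utility of an agent. -/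
def maximin [Fintype V] (G : SimpleGraph V) (f : P → P → ℝ) (πf : P ≃ V) : Prop :=
  ∀ π : P ≃ V, minUtil G f π ≤ minUtil G f πf

/-- A maximum arrangement maximizes the social welfare. -/
def maximum [Fintype P] [Fintype V] (G : SimpleGraph V) (f : P → P → ℝ) (πm : P ≃ V) : Prop :=
  ∀ π : P ≃ V, sw G f π ≤ sw G f πm

end SeatArrangement

open SeatArrangement

/-- Preferences for STATEMENT 7: the agents are `P_K ⊕ P_C` with `|P_K| = |P_C| = n`.
Each pair of distinct agents of `P_K` mutually have preference 1; consecutive agents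
`c_i, c_{i+1 mod n}` of the cycle `P_C` mutually have preference 1; all other
preferences are 0 (binary and symmetric). -/
def prefs7 (n : ℕ) : (Fin n ⊕ Fin n) → (Fin n ⊕ Fin n) → ℝ
  | .inl a, .inl b => if a ≠ b then 1 else 0
  | .inr a, .inr b => if b.val = (a.val + 1) % n ∨ a.val = (b.val + 1) % n then 1 else 0
  | _, _ => 0

/-- Seat graph for STATEMENT 7: the disjoint union of a clique `K_n` and `n/3` disjoint
triangles (`3 ∣ n`), grouping vertices with the same value of `⌊·/3⌋`. -/
def seat7 (n : ℕ) : SimpleGraph (Fin n ⊕ Fin n) :=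
  (⊤ : SimpleGraph (Fin n)) ⊕g
    SimpleGraph.fromRel (fun a b : Fin n => a.val / 3 = b.val / 3)

/-!
Seating the clique agents in the triangles and the cycle agents in the clique gives every agent
utility 2, so in a maximin arrangement every agent has utility at least 2. A cycle agent in a
triangle would then have to like both triangle-mates, which would in turn like each other: a
triangle in a cycle of length at least 4. Hence the clique agents fill the triangles, every
utility is exactly 2, and the welfare is `4n`. Seating the clique agents in the clique and the
cycle, cut into paths of three, in the triangles gives welfare `n (n - 1) + 4n/3 = n² + n/3`.
-/

open Finset SimpleGraph

namespace SeatArrangement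

section General

variable {P V : Type*} [Fintype P] [Fintype V] {G : SimpleGraph V} {f : P → P → ℝ}
  {π : P ≃ V} {p : P}

variable (G f π p) in
theorem utility_eq_sum_agents :
    utility G f π p = ∑ q, if G.Adj (π p) (π q) then f p q else 0 :=
  Fintype.sum_equiv π.symm _ _ fun v => by simp

variable (G π p) in
theorem degree_eq_sum_agents :
    (G.degree (π p) : ℝ) = ∑ q, if G.Adj (π p) (π q) then 1 else 0 := by
  rw [degree_eq_sum_if_adj]
  exact Fintype.sum_equiv π.symm _ _ fun v => by simp

theorem utility_le_sum (hf : ∀ q, 0 ≤ f p q) : utility G f π p ≤ ∑ q, f p q := by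
  rw [utility_eq_sum_agents]
  exact sum_le_sum fun q _ => by split_ifs <;> simp [hf q]

theorem utility_eq_sum_of_adj (h : ∀ q, f p q ≠ 0 → G.Adj (π p) (π q)) :
    utility G f π p = ∑ q, f p q := by
  rw [utility_eq_sum_agents]
  refine sum_congr rfl fun q _ => ?_
  by_cases hq : f p q = 0 <;> simp [hq, h q]

theorem utility_eq_degree (h : ∀ q, G.Adj (π p) (π q) → f p q = 1) :
    utility G f π p = G.degree (π p) := by
  rw [utility_eq_sum_agents, degree_eq_sum_agents]
  exact sum_congr rfl fun q _ => by split_ifs with hq <;> simp [h q, hq]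

theorem utility_le_degree (hf : ∀ q, f p q ≤ 1) : utility G f π p ≤ G.degree (π p) := by
  rw [utility_eq_sum_agents, degree_eq_sum_agents]
  exact sum_le_sum fun q _ => by split_ifs <;> simp [hf q]

theorem pref_eq_one_of_degree_le_utility (hf : ∀ q, f p q ≤ 1)
    (hp : (G.degree (π p) : ℝ) ≤ utility G f π p) {q : P} (hq : G.Adj (π p) (π q)) :
    f p q = 1 := by
  have hle : ∀ r ∈ univ, (if G.Adj (π p) (π r) then f p r else 0)
      ≤ if G.Adj (π p) (π r) then 1 else 0 := fun r _ => by split_ifs <;> simp [hf r]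
  rw [utility_eq_sum_agents, degree_eq_sum_agents] at hp
  have heq := (sum_eq_sum_iff_of_le hle).1 (le_antisymm (sum_le_sum hle) hp) q (mem_univ q)
  simpa [hq] using heq

theorem le_utility_of_maximin [Nonempty P] {πf : P ≃ V} {c : ℝ} (hm : maximin G f πf)
    (hπ : ∀ p, c ≤ utility G f π p) : ∀ p, c ≤ utility G f πf p := fun p =>
  calc c ≤ minUtil G f π := le_csInf (Set.range_nonempty _) (Set.forall_mem_range.2 hπ)
    _ ≤ minUtil G f πf := hm π
    _ ≤ utility G f πf p := csInf_le (Set.finite_range _).bddBelow ⟨p, rfl⟩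

end General

end SeatArrangement

theorem SimpleGraph.cycleGraph_adj_iff_eq_add_one {n : ℕ} {a b : Fin (n + 2)} :
    (cycleGraph (n + 2)).Adj a b ↔ b = a + 1 ∨ a = b + 1 := by
  rw [cycleGraph_adj, sub_eq_iff_eq_add', sub_eq_iff_eq_add', or_comm]

theorem SimpleGraph.cycleGraph_cliqueFree_three {n : ℕ} (hn : 4 ≤ n) :
    (cycleGraph n).CliqueFree 3 := by
  obtain ⟨n, rfl⟩ := Nat.exists_eq_add_of_le' hn
  intro t ht
  obtain ⟨a, b, c, hab, hac, hbc, rfl⟩ := is3Clique_iff.1 ht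
  simp only [cycleGraph_adj_iff_eq_add_one, Fin.ext_iff, Fin.val_add_one, Fin.val_last]
    at hab hac hbc
  split_ifs at hab hac hbc <;> omega

theorem Equiv.exists_apply_inr_eq_inl {α β γ : Type*} [Finite β] (e : α ⊕ β ≃ β ⊕ γ)
    (h : ∀ b, ∃ b', e (.inr b) = .inl b') (b' : β) : ∃ b, e (.inr b) = .inl b' := by
  choose g hg using h
  have hg_inj : Function.Injective g := fun x y hxy =>
    Sum.inr_injective (e.injective (by rw [hg, hg, hxy]))
  obtain ⟨b, rfl⟩ := Finite.surjective_of_injective hg_inj b'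
  exact ⟨b, hg b⟩

section

variable {n : ℕ}

theorem prefs7_inr_inr (hn : 2 ≤ n) (a b : Fin n) :
    prefs7 n (.inr a) (.inr b) = if (cycleGraph n).Adj a b then 1 else 0 := by
  obtain ⟨n, rfl⟩ := Nat.exists_eq_add_of_le' hn
  simp [prefs7, cycleGraph_adj_iff_eq_add_one, Fin.ext_iff, Fin.val_add]

theorem prefs7_mem (p q : Fin n ⊕ Fin n) : prefs7 n p q = 0 ∨ prefs7 n p q = 1 := by
  rcases p with a | a <;> rcases q with b | b <;> simp only [prefs7] <;> (try split_ifs) <;> simp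

theorem prefs7_nonneg (p q : Fin n ⊕ Fin n) : 0 ≤ prefs7 n p q := by
  rcases prefs7_mem p q with h | h <;> simp [h]

theorem prefs7_le_one (p q : Fin n ⊕ Fin n) : prefs7 n p q ≤ 1 := by
  rcases prefs7_mem p q with h | h <;> simp [h]

theorem prefs7_symm (p q : Fin n ⊕ Fin n) : prefs7 n p q = prefs7 n q p := by
  rcases p with a | a <;> rcases q with b | b <;> simp only [prefs7]
  · exact if_congr ne_comm rfl rfl
  · exact if_congr or_comm rfl rfl

theorem exists_eq_inr_of_prefs7_ne_zero (hn : 2 ≤ n) {c : Fin n} {q : Fin n ⊕ Fin n}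
    (h : prefs7 n (.inr c) q ≠ 0) : ∃ d, q = .inr d ∧ (cycleGraph n).Adj c d := by
  rcases q with b | d
  · exact absurd rfl h
  · rw [prefs7_inr_inr hn] at h
    exact ⟨d, rfl, by simpa using h⟩

theorem sum_prefs7_inl (a : Fin n) : ∑ q, prefs7 n (.inl a) q = n - 1 := by
  simp only [Fintype.sum_sum_type, prefs7, sum_const_zero, add_zero, sum_boole, filter_ne,
    card_erase_of_mem (mem_univ a), card_univ, Fintype.card_fin]
  exact Nat.cast_pred a.pos

theorem sum_prefs7_inr (hn : 3 ≤ n) (c : Fin n) : ∑ q, prefs7 n (.inr c) q = 2 := by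
  obtain ⟨n, rfl⟩ := Nat.exists_eq_add_of_le' hn
  simp only [Fintype.sum_sum_type, prefs7_inr_inr (by omega : 2 ≤ n + 3), ← degree_eq_sum_if_adj,
    cycleGraph_degree_three_le]
  simp [prefs7]

theorem seat7_neighborFinset_inr (h3 : 3 ∣ n) (s : Fin n) : ∃ t t' : Fin n,
    (seat7 n).Adj (.inr t) (.inr t') ∧ (seat7 n).neighborFinset (.inr s) = {.inr t, .inr t'} := by
  have hs := s.isLt
  refine ⟨⟨3 * (s / 3) + (s % 3 + 1) % 3, by omega⟩, ⟨3 * (s / 3) + (s % 3 + 2) % 3, by omega⟩,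
    ?_, ?_⟩
  · simp [seat7, Fin.ext_iff]
    omega
  · ext (d | d) <;> rw [SimpleGraph.mem_neighborFinset] <;> simp [seat7, Fin.ext_iff]
    omega

theorem seat7_degree_inr (h3 : 3 ∣ n) (s : Fin n) : (seat7 n).degree (.inr s) = 2 := by
  obtain ⟨t, t', htt', hs⟩ := seat7_neighborFinset_inr h3 s
  rw [← card_neighborFinset_eq_degree, hs, card_pair htt'.ne]

theorem utility_seat7_sumComm (hn : 3 ≤ n) (h3 : 3 ∣ n) (p : Fin n ⊕ Fin n) :
    utility (seat7 n) (prefs7 n) (Equiv.sumComm _ _) p = 2 := by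
  rcases p with a | c
  · rw [utility_eq_degree, Equiv.sumComm_apply, Sum.swap_inl, seat7_degree_inr h3, Nat.cast_ofNat]
    rintro (b | d) hab
    · simp only [Equiv.sumComm_apply, Sum.swap_inl] at hab
      simpa [prefs7] using fun h => hab.ne (congrArg Sum.inr h)
    · simp [seat7] at hab
  · rw [utility_eq_sum_of_adj, sum_prefs7_inr hn]
    intro q hq
    obtain ⟨d, rfl, hcd⟩ := exists_eq_inr_of_prefs7_ne_zero (by omega) hq
    simpa [seat7] using hcd.ne

theorem seat7_symm_inr_eq_inl_of_two_le_utility (hn : 4 ≤ n) (h3 : 3 ∣ n)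
    {π : (Fin n ⊕ Fin n) ≃ (Fin n ⊕ Fin n)} (h : ∀ p, 2 ≤ utility (seat7 n) (prefs7 n) π p)
    (s : Fin n) : ∃ a, π.symm (.inr s) = .inl a := by
  have likes : ∀ {x y}, (seat7 n).Adj (.inr x) (.inr y) →
      prefs7 n (π.symm (.inr x)) (π.symm (.inr y)) ≠ 0 := fun {x y} hxy => by
    have hdeg : ((seat7 n).degree (π (π.symm (.inr x))) : ℝ)
        ≤ utility (seat7 n) (prefs7 n) π (π.symm (.inr x)) := by
      rw [π.apply_symm_apply, seat7_degree_inr h3]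
      exact_mod_cast h _
    rw [pref_eq_one_of_degree_le_utility (prefs7_le_one _) hdeg (by simpa using hxy)]
    exact one_ne_zero
  obtain ⟨t, t', htt', hs⟩ := seat7_neighborFinset_inr h3 s
  have hst : (seat7 n).Adj (.inr s) (.inr t) := by simp [← mem_neighborFinset, hs]
  have hst' : (seat7 n).Adj (.inr s) (.inr t') := by simp [← mem_neighborFinset, hs]
  rcases hp : π.symm (.inr s) with a | c
  · exact ⟨a, rfl⟩
  obtain ⟨d, hd, hcd⟩ := exists_eq_inr_of_prefs7_ne_zero (by omega) (hp ▸ likes hst)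
  obtain ⟨d', hd', hcd'⟩ := exists_eq_inr_of_prefs7_ne_zero (by omega) (hp ▸ likes hst')
  obtain ⟨w, hw, hdw⟩ := exists_eq_inr_of_prefs7_ne_zero (by omega) (hd ▸ likes htt')
  obtain rfl : d' = w := Sum.inr_injective (hd'.symm.trans hw)
  exact (cycleGraph_cliqueFree_three hn {c, d, d'} (is3Clique_triple_iff.2 ⟨hcd, hcd', hdw⟩)).elim

theorem sw_seat7_eq_of_two_le_utility (hn : 4 ≤ n) (h3 : 3 ∣ n)
    {π : (Fin n ⊕ Fin n) ≃ (Fin n ⊕ Fin n)} (h : ∀ p, 2 ≤ utility (seat7 n) (prefs7 n) π p) :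
    sw (seat7 n) (prefs7 n) π = 4 * n := by
  have hle : ∀ p, utility (seat7 n) (prefs7 n) π p ≤ 2 := by
    rintro (a | c)
    · obtain ⟨s, hs⟩ :=
        Equiv.exists_apply_inr_eq_inl π.symm (seat7_symm_inr_eq_inl_of_two_le_utility hn h3 h) a
      have hs' : π (.inl a) = .inr s := by rw [← hs, π.apply_symm_apply]
      have := utility_le_degree (G := seat7 n) (π := π) (prefs7_le_one (.inl a))
      rwa [hs', seat7_degree_inr h3, Nat.cast_ofNat] at this
    · exact (utility_le_sum (prefs7_nonneg _)).trans (sum_prefs7_inr (by omega) c).le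
  simp only [sw, fun p => le_antisymm (hle p) (h p), sum_const, card_univ, Fintype.card_sum,
    Fintype.card_fin, nsmul_eq_mul]
  push_cast
  ring

theorem utility_seat7_refl_inl (a : Fin n) :
    utility (seat7 n) (prefs7 n) (Equiv.refl _) (.inl a) = n - 1 := by
  rw [utility_eq_sum_of_adj, sum_prefs7_inl]
  rintro (b | d) hab
  · simpa [seat7, prefs7] using hab
  · exact absurd rfl hab

theorem utility_seat7_refl_inr (hn : 4 ≤ n) (h3 : 3 ∣ n) (c : Fin n) :
    utility (seat7 n) (prefs7 n) (Equiv.refl _) (.inr c) = if c.val % 3 = 1 then 2 else 1 := by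
  obtain ⟨m, rfl⟩ := Nat.exists_eq_add_of_le' hn
  rw [utility_eq_sum_agents, Fintype.sum_sum_type]
  simp only [seat7, prefs7_inr_inr (by omega : 2 ≤ m + 4), cycleGraph_adj_iff_eq_add_one]
  simp [← ite_and, sum_boole]
  have hc := c.isLt
  rcases (by omega : c.val % 3 = 0 ∨ c.val % 3 = 1 ∨ c.val % 3 = 2) with h | h | h
  · rw [if_neg (by omega), Nat.cast_eq_one, card_eq_one]
    refine ⟨⟨c + 1, by omega⟩, ?_⟩
    ext x
    simp [Fin.ext_iff, Fin.val_add_one]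
    split_ifs <;> omega
  · rw [if_pos h]
    norm_cast
    refine card_eq_two.2 ⟨⟨c - 1, by omega⟩, ⟨c + 1, by omega⟩, by simp [Fin.ext_iff], ?_⟩
    ext x
    simp [Fin.ext_iff, Fin.val_add_one]
    split_ifs <;> omega
  · rw [if_neg (by omega), Nat.cast_eq_one, card_eq_one]
    refine ⟨⟨c - 1, by omega⟩, ?_⟩
    ext x
    simp [Fin.ext_iff, Fin.val_add_one]
    split_ifs <;> omega

theorem sum_range_three_mul_ite_mod_three (m : ℕ) :
    ∑ i ∈ range (3 * m), (if i % 3 = 1 then (2 : ℝ) else 1) = 4 * m := by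
  induction m with
  | zero => simp
  | succ m ih =>
    rw [show 3 * (m + 1) = 3 * m + 1 + 1 + 1 by ring, sum_range_succ, sum_range_succ,
      sum_range_succ, ih]
    simp [Nat.add_mod]
    ring

theorem sw_seat7_refl (hn : 4 ≤ n) (h3 : 3 ∣ n) :
    sw (seat7 n) (prefs7 n) (Equiv.refl _) = n ^ 2 + n / 3 := by
  rw [sw, Fintype.sum_sum_type]
  simp only [utility_seat7_refl_inl, utility_seat7_refl_inr hn h3]
  rw [Fin.sum_univ_eq_sum_range (fun i => if i % 3 = 1 then (2 : ℝ) else 1)]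
  obtain ⟨m, rfl⟩ := h3
  rw [sum_range_three_mul_ite_mod_three]
  simp
  ring

end

/-- for every `n ≥ 6` divisible by 3, in the above binary symmetric instance,
every maximin arrangement has social welfare `4n`, the maximum social welfare is at least
`n² + n/3`, and hence the price of fairness is at least `n/4 + 1/12`. -/
theorem pof_lower_bound_binary_symmetric (n : ℕ) (hn : 6 ≤ n) (h3 : 3 ∣ n) :
    (∀ p q : Fin n ⊕ Fin n, p ≠ q → prefs7 n p q = 0 ∨ prefs7 n p q = 1) ∧
    (∀ p q : Fin n ⊕ Fin n, p ≠ q → prefs7 n p q = prefs7 n q p) ∧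
    (∀ πf : (Fin n ⊕ Fin n) ≃ (Fin n ⊕ Fin n), maximin (seat7 n) (prefs7 n) πf →
      sw (seat7 n) (prefs7 n) πf = 4 * n) ∧
    (∃ π : (Fin n ⊕ Fin n) ≃ (Fin n ⊕ Fin n),
      (n : ℝ)^2 + n/3 ≤ sw (seat7 n) (prefs7 n) π) ∧
    (∀ πf πm : (Fin n ⊕ Fin n) ≃ (Fin n ⊕ Fin n),
      maximin (seat7 n) (prefs7 n) πf → maximum (seat7 n) (prefs7 n) πm →
      ((n : ℝ)/4 + 1/12) * sw (seat7 n) (prefs7 n) πf ≤ sw (seat7 n) (prefs7 n) πm) := by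
  have : NeZero n := ⟨by omega⟩
  have hfair : ∀ πf, maximin (seat7 n) (prefs7 n) πf → sw (seat7 n) (prefs7 n) πf = 4 * n :=
    fun πf hm => sw_seat7_eq_of_two_le_utility (by omega) h3
      (le_utility_of_maximin hm fun p => (utility_seat7_sumComm (by omega) h3 p).ge)
  have hrefl := sw_seat7_refl (by omega) h3
  refine ⟨fun p q _ => prefs7_mem p q, fun p q _ => prefs7_symm p q, hfair,
    ⟨Equiv.refl _, hrefl.ge⟩, fun πf πm hf hm => ?_⟩
  calc ((n : ℝ) / 4 + 1 / 12) * sw (seat7 n) (prefs7 n) πf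
      = sw (seat7 n) (prefs7 n) (Equiv.refl _) := by rw [hfair πf hf, hrefl]; ring
    _ ≤ sw (seat7 n) (prefs7 n) πm := hm _
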